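/- arXiv:1103.2171 — 2 statements merged into one kernel-verified Lean document; each statement's English description precedes it below -/
import Mathlib

section
/- Equivariance of the splitting maps under a lifted linear symmetry: let n ∈ ℕ; let M, D : ℝⁿ → Matrix (Fin n) (Fin n) ℝ with M(q) symmetric positive definite and D(q) symmetric for all q; let V : ℝⁿ → ℝ be C¹; let ε ≥ 0 and τ ∈ ℝ. Let S be an invertible n×n real matrix with Sᵀ M(S q) S = M(q), Sᵀ D(S q) S = D(q), and V(S q) = V(q) for all q, and let Λ(q,p) = (S q, (Sᵀ)⁻¹ p). Then Λ commutes with each of the following maps of ℝⁿ × ℝⁿ: (i) the drift map (q,p) ↦ (q + τ • M(q)⁻¹ p, p); (ii) the kick map (q,p) ↦ (q, p − τ • ∇V(q)); (iii) the dissipative map (q,p) ↦ (q, exp(−τ ε D(q) M(q)⁻¹) p), where exp is the matrix exponential. In particular the composed splitting integrators commute with Λ. -/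
open scoped RealInnerProductSpace
open Matrix

/-- Action of an `n × n` real matrix on a vector in `EuclideanSpace ℝ (Fin n)`. -/
noncomputable def mApp {n : ℕ} (A : Matrix (Fin n) (Fin n) ℝ)
    (v : EuclideanSpace ℝ (Fin n)) : EuclideanSpace ℝ (Fin n) :=
  Matrix.toEuclideanLin A v

/-- The drift map `(q,p) ↦ (q + τ M(q)⁻¹ p, p)`. -/
noncomputable def driftMap {n : ℕ} (τ : ℝ)
    (M : EuclideanSpace ℝ (Fin n) → Matrix (Fin n) (Fin n) ℝ)
    (z : EuclideanSpace ℝ (Fin n) × EuclideanSpace ℝ (Fin n)) :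
    EuclideanSpace ℝ (Fin n) × EuclideanSpace ℝ (Fin n) :=
  (z.1 + τ • mApp ((M z.1)⁻¹) z.2, z.2)

/-- The kick map `(q,p) ↦ (q, p - τ ∇V(q))`. -/
noncomputable def kickMap {n : ℕ} (τ : ℝ)
    (V : EuclideanSpace ℝ (Fin n) → ℝ)
    (z : EuclideanSpace ℝ (Fin n) × EuclideanSpace ℝ (Fin n)) :
    EuclideanSpace ℝ (Fin n) × EuclideanSpace ℝ (Fin n) :=
  (z.1, z.2 - τ • gradient V z.1)

/-- The dissipative map `(q,p) ↦ (q, exp(-τ ε D(q) M(q)⁻¹) p)`. -/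
noncomputable def dissMap {n : ℕ} (τ ε : ℝ)
    (M D : EuclideanSpace ℝ (Fin n) → Matrix (Fin n) (Fin n) ℝ)
    (z : EuclideanSpace ℝ (Fin n) × EuclideanSpace ℝ (Fin n)) :
    EuclideanSpace ℝ (Fin n) × EuclideanSpace ℝ (Fin n) :=
  (z.1, mApp (NormedSpace.exp ((-(τ * ε)) • (D z.1 * (M z.1)⁻¹))) z.2)

/-- The cotangent lift `Λ(q,p) = (S q, (Sᵀ)⁻¹ p)` of the linear map `q ↦ S q`. -/
noncomputable def liftedAction {n : ℕ} (S : Matrix (Fin n) (Fin n) ℝ)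
    (z : EuclideanSpace ℝ (Fin n) × EuclideanSpace ℝ (Fin n)) :
    EuclideanSpace ℝ (Fin n) × EuclideanSpace ℝ (Fin n) :=
  (mApp S z.1, mApp ((Sᵀ)⁻¹) z.2)

/-!
Invariance of `M` under the congruence `N ↦ Sᵀ N S` gives `S M(q)⁻¹ = M(Sq)⁻¹ S⁻ᵀ`, so `Λ`
intertwines the velocity `M(q)⁻¹ p` with its image; similarly `D(q) M(q)⁻¹` is the similarity
transform `Sᵀ (D(Sq) M(Sq)⁻¹) S⁻ᵀ`, which passes through the matrix exponential. Finally the chain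
rule for `V ∘ S = V` shows that `∇V` transforms as a covector, `∇V(Sq) = S⁻ᵀ ∇V(q)`, which is
exactly how `Λ` moves momenta.
-/

section Gradient

variable {𝕜 E F : Type*} [RCLike 𝕜]
  [NormedAddCommGroup E] [InnerProductSpace 𝕜 E] [CompleteSpace E]
  [NormedAddCommGroup F] [InnerProductSpace 𝕜 F] [CompleteSpace F]

theorem gradient_comp_continuousLinearEquiv (f : F → 𝕜) (L : E ≃L[𝕜] F) (x : E) :
    gradient (f ∘ L) x = ContinuousLinearMap.adjoint (L : E →L[𝕜] F) (gradient f (L x)) := by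
  refine ext_inner_right 𝕜 fun y => ?_
  rw [inner_gradient_left, L.comp_right_fderiv, ContinuousLinearMap.adjoint_inner_left,
    inner_gradient_left]
  rfl

end Gradient

namespace Matrix

variable {n R : Type*} [Fintype n] [DecidableEq n] [CommRing R] {S : Matrix n n R}

theorem mul_inv_congruence (hS : IsUnit S) (N : Matrix n n R) :
    S * (Sᵀ * N * S)⁻¹ = N⁻¹ * Sᵀ⁻¹ := by
  rw [mul_inv_rev, mul_inv_rev,
    mul_nonsing_inv_cancel_left _ _ ((isUnit_iff_isUnit_det S).mp hS)]

theorem congruence_mul_inv_congruence (hS : IsUnit S) (A N : Matrix n n R) :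
    Sᵀ * A * S * (Sᵀ * N * S)⁻¹ = Sᵀ * (A * N⁻¹) * Sᵀ⁻¹ := by
  rw [Matrix.mul_assoc _ S, mul_inv_congruence hS, Matrix.mul_assoc, Matrix.mul_assoc,
    Matrix.mul_assoc]

end Matrix

section MatrixAction

variable {n : ℕ}

theorem mApp_eq_toEuclideanCLM (A : Matrix (Fin n) (Fin n) ℝ) :
    mApp A = toEuclideanCLM (𝕜 := ℝ) A :=
  rfl

theorem mApp_mul (A B : Matrix (Fin n) (Fin n) ℝ) (v : EuclideanSpace ℝ (Fin n)) :
    mApp (A * B) v = mApp A (mApp B v) := by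
  rw [mApp_eq_toEuclideanCLM, map_mul]
  rfl

theorem mApp_one (v : EuclideanSpace ℝ (Fin n)) : mApp 1 v = v := by
  rw [mApp_eq_toEuclideanCLM, map_one]
  rfl

theorem mApp_mApp_of_mul_eq {A B X Y : Matrix (Fin n) (Fin n) ℝ} (h : A * X = Y * B)
    (v : EuclideanSpace ℝ (Fin n)) : mApp A (mApp X v) = mApp Y (mApp B v) := by
  rw [← mApp_mul, h, mApp_mul]

theorem gradient_comp_mApp (f : EuclideanSpace ℝ (Fin n) → ℝ) {S : Matrix (Fin n) (Fin n) ℝ}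
    (hS : IsUnit S) (x : EuclideanSpace ℝ (Fin n)) :
    gradient (fun y => f (mApp S y)) x = mApp Sᵀ (gradient f (mApp S x)) := by
  let L := ContinuousLinearEquiv.unitsEquiv ℝ _
    (hS.map (toEuclideanCLM (n := Fin n) (𝕜 := ℝ))).unit
  have hL : (L : EuclideanSpace ℝ (Fin n) →L[ℝ] _) = toEuclideanCLM (𝕜 := ℝ) S := rfl
  have h := gradient_comp_continuousLinearEquiv f L x
  rwa [hL, ← ContinuousLinearMap.star_eq_adjoint, ← map_star, star_eq_conjTranspose,
    conjTranspose_eq_transpose_of_trivial] at h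

theorem gradient_mApp_of_invariant {f : EuclideanSpace ℝ (Fin n) → ℝ}
    {S : Matrix (Fin n) (Fin n) ℝ} (hS : IsUnit S) (hf : ∀ x, f (mApp S x) = f x)
    (x : EuclideanSpace ℝ (Fin n)) : gradient f (mApp S x) = mApp Sᵀ⁻¹ (gradient f x) := by
  have h := gradient_comp_mApp f hS x
  simp only [hf] at h
  have hST : IsUnit Sᵀ.det := (isUnit_iff_isUnit_det _).mp ((isUnit_transpose S).mpr hS)
  rw [h, ← mApp_mul, nonsing_inv_mul _ hST, mApp_one]

end MatrixAction

section Equivariance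

variable {n : ℕ} {S : Matrix (Fin n) (Fin n) ℝ}

theorem liftedAction_comp_driftMap (hS : IsUnit S)
    {M : EuclideanSpace ℝ (Fin n) → Matrix (Fin n) (Fin n) ℝ}
    (hM : ∀ x, Sᵀ * M (mApp S x) * S = M x) (τ : ℝ) :
    liftedAction S ∘ driftMap τ M = driftMap τ M ∘ liftedAction S := by
  funext ⟨q, p⟩
  have h : S * (M q)⁻¹ = (M (mApp S q))⁻¹ * Sᵀ⁻¹ := by rw [← hM q, mul_inv_congruence hS]
  refine Prod.ext ?_ rfl
  dsimp only [Function.comp_apply, driftMap, liftedAction]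
  rw [mApp_eq_toEuclideanCLM S, map_add, map_smul, ← mApp_eq_toEuclideanCLM,
    mApp_mApp_of_mul_eq h]

theorem liftedAction_comp_kickMap (hS : IsUnit S) {V : EuclideanSpace ℝ (Fin n) → ℝ}
    (hV : ∀ x, V (mApp S x) = V x) (τ : ℝ) :
    liftedAction S ∘ kickMap τ V = kickMap τ V ∘ liftedAction S := by
  funext ⟨q, p⟩
  refine Prod.ext rfl ?_
  dsimp only [Function.comp_apply, kickMap, liftedAction]
  rw [gradient_mApp_of_invariant hS hV, mApp_eq_toEuclideanCLM, map_sub, map_smul]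

theorem liftedAction_comp_dissMap (hS : IsUnit S)
    {M D : EuclideanSpace ℝ (Fin n) → Matrix (Fin n) (Fin n) ℝ}
    (hM : ∀ x, Sᵀ * M (mApp S x) * S = M x) (hD : ∀ x, Sᵀ * D (mApp S x) * S = D x)
    (τ ε : ℝ) : liftedAction S ∘ dissMap τ ε M D = dissMap τ ε M D ∘ liftedAction S := by
  funext ⟨q, p⟩
  have hST : IsUnit Sᵀ := (isUnit_transpose S).mpr hS
  have hconj : -(τ * ε) • (D q * (M q)⁻¹) =
      Sᵀ * (-(τ * ε) • (D (mApp S q) * (M (mApp S q))⁻¹)) * Sᵀ⁻¹ := by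
    rw [← hD q, ← hM q, congruence_mul_inv_congruence hS, Matrix.mul_smul, Matrix.smul_mul]
  have h : Sᵀ⁻¹ * NormedSpace.exp (-(τ * ε) • (D q * (M q)⁻¹)) =
      NormedSpace.exp (-(τ * ε) • (D (mApp S q) * (M (mApp S q))⁻¹)) * Sᵀ⁻¹ := by
    rw [hconj, exp_conj _ _ hST, Matrix.mul_assoc, nonsing_inv_mul_cancel_left _ _
      ((isUnit_iff_isUnit_det _).mp hST)]
  exact Prod.ext rfl (mApp_mApp_of_mul_eq h p)

end Equivariance

theorem splitting_maps_equivariant_general (n : ℕ)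
    (M D : EuclideanSpace ℝ (Fin n) → Matrix (Fin n) (Fin n) ℝ)
    (V : EuclideanSpace ℝ (Fin n) → ℝ)
    (ε τ : ℝ)
    (S : Matrix (Fin n) (Fin n) ℝ) (hS : IsUnit S)
    (hMinv : ∀ x : EuclideanSpace ℝ (Fin n), Sᵀ * M (mApp S x) * S = M x)
    (hDinv : ∀ x : EuclideanSpace ℝ (Fin n), Sᵀ * D (mApp S x) * S = D x)
    (hVinv : ∀ x : EuclideanSpace ℝ (Fin n), V (mApp S x) = V x) :
    liftedAction S ∘ driftMap τ M = driftMap τ M ∘ liftedAction S ∧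
    liftedAction S ∘ kickMap τ V = kickMap τ V ∘ liftedAction S ∧
    liftedAction S ∘ dissMap τ ε M D = dissMap τ ε M D ∘ liftedAction S :=
  ⟨liftedAction_comp_driftMap hS hMinv τ, liftedAction_comp_kickMap hS hVinv τ,
    liftedAction_comp_dissMap hS hMinv hDinv τ ε⟩

/-- Equivariance of the splitting maps under a lifted linear symmetry: if the metric `M`,
the dissipation tensor `D` and the potential `V` are invariant under the cotangent-lifted
action `Λ(q,p) = (S q, (Sᵀ)⁻¹ p)` of an invertible matrix `S`, then `Λ` commutes with the
drift, kick, and dissipative maps; hence with the composed splitting integrators. -/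
theorem splitting_maps_equivariant (n : ℕ)
    (M D : EuclideanSpace ℝ (Fin n) → Matrix (Fin n) (Fin n) ℝ)
    (hMpd : ∀ q, (M q).PosDef) (hDsym : ∀ q, (D q).IsSymm)
    (V : EuclideanSpace ℝ (Fin n) → ℝ) (hV : ContDiff ℝ 1 V)
    (ε τ : ℝ) (hε : 0 ≤ ε)
    (S : Matrix (Fin n) (Fin n) ℝ) (hS : IsUnit S)
    (hMinv : ∀ x : EuclideanSpace ℝ (Fin n), Sᵀ * M (mApp S x) * S = M x)
    (hDinv : ∀ x : EuclideanSpace ℝ (Fin n), Sᵀ * D (mApp S x) * S = D x)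
    (hVinv : ∀ x : EuclideanSpace ℝ (Fin n), V (mApp S x) = V x) :
    liftedAction S ∘ driftMap τ M = driftMap τ M ∘ liftedAction S ∧
    liftedAction S ∘ kickMap τ V = kickMap τ V ∘ liftedAction S ∧
    liftedAction S ∘ dissMap τ ε M D = dissMap τ ε M D ∘ liftedAction S :=
  splitting_maps_equivariant_general n M D V ε τ S hS hMinv hDinv hVinv
end

section
/- Each of the following maps of {(q,p) ∈ ℝ³ × ℝ³ : q ≠ 0} preserves the azimuthal angular momentum J₃(q,p) = (q ×₃ p)₃: (i) the drift map (q, p) ↦ (q + (τ/m) • p, p) (this one in fact preserves the full cross product q × p and is defined for all q); (ii) the kick map (q, p) ↦ (q, p − τ k (1 − ℓ/‖q‖) • q + τ • (0, 0, −m g₀)); (iii) the dissipative map (q, p) ↦ (q, p + (Real.exp(−τ ε/m) − 1) • (⟨q, p⟩/‖q‖²) • q); for all τ ∈ ℝ, m, k, ℓ > 0, g₀ ∈ ℝ, ε ≥ 0. Consequently any composition of these maps (in particular one step of the three-term splitting integrator for the damped elastic pendulum) exactly conserves J₃. -/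
/-!
The drift map shears `q` along `p`, and the kick and dissipative maps add to `p` a multiple
of `q` plus (for the kick) a vertical vector. Since the cross product is bilinear and
alternating, `q × p` is unchanged by the shear, and `J₃ = (q × p)₃` only sees the horizontal
components of `p`, on which the added vector is parallel to `q`.
-/

open scoped RealInnerProductSpace

def J3 (q p : EuclideanSpace ℝ (Fin 3)) : ℝ := q 0 * p 1 - q 1 * p 0

def cross3 (q p : EuclideanSpace ℝ (Fin 3)) : EuclideanSpace ℝ (Fin 3) :=
  WithLp.toLp 2 ![q 1 * p 2 - q 2 * p 1, q 2 * p 0 - q 0 * p 2, q 0 * p 1 - q 1 * p 0]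

def grav (m g₀ : ℝ) : EuclideanSpace ℝ (Fin 3) := WithLp.toLp 2 ![0, 0, -(m * g₀)]

section

variable (q p r : EuclideanSpace ℝ (Fin 3)) (c : ℝ)

theorem cross3_add_left : cross3 (q + r) p = cross3 q p + cross3 r p := by
  ext i; fin_cases i <;> simp [cross3] <;> ring

theorem cross3_smul_left : cross3 (c • q) p = c • cross3 q p := by
  ext i; fin_cases i <;> simp [cross3] <;> ring

theorem cross3_self : cross3 q q = 0 := by
  ext i; fin_cases i <;> simp [cross3] <;> ring

theorem cross3_add_smul_left_self : cross3 (q + c • p) p = cross3 q p := by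
  rw [cross3_add_left, cross3_smul_left, cross3_self, smul_zero, add_zero]

theorem J3_eq_cross3 : J3 q p = cross3 q p 2 := by
  simp [J3, cross3]

theorem J3_add_right : J3 q (p + r) = J3 q p + J3 q r := by
  simp only [J3, PiLp.add_apply]; ring

theorem J3_sub_right : J3 q (p - r) = J3 q p - J3 q r := by
  simp only [J3, PiLp.sub_apply]; ring

theorem J3_smul_right : J3 q (c • p) = c * J3 q p := by
  simp only [J3, PiLp.smul_apply, smul_eq_mul]; ring

theorem J3_self : J3 q q = 0 := by
  simp only [J3]; ring

theorem J3_grav_right (m g₀ : ℝ) : J3 q (grav m g₀) = 0 := by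
  simp [J3, grav]

end

theorem elastic_pendulum_splitting_maps_conserve_J3_general
    (τ m k ℓ g₀ ε : ℝ) :
    (∀ q p : EuclideanSpace ℝ (Fin 3), cross3 (q + (τ / m) • p) p = cross3 q p) ∧
    (∀ q p : EuclideanSpace ℝ (Fin 3), J3 (q + (τ / m) • p) p = J3 q p) ∧
    (∀ q p : EuclideanSpace ℝ (Fin 3), q ≠ 0 →
      J3 q (p - (τ * k * (1 - ℓ / ‖q‖)) • q + τ • grav m g₀) = J3 q p) ∧
    (∀ q p : EuclideanSpace ℝ (Fin 3), q ≠ 0 →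
      J3 q (p + (Real.exp (-(τ * ε) / m) - 1) • ((⟪q, p⟫ / ‖q‖ ^ 2) • q)) = J3 q p) := by
  refine ⟨fun q p => cross3_add_smul_left_self q p _, fun q p => ?_, fun q p _ => ?_,
    fun q p _ => ?_⟩
  · rw [J3_eq_cross3, cross3_add_smul_left_self, ← J3_eq_cross3]
  · rw [J3_add_right, J3_sub_right, J3_smul_right, J3_self, J3_smul_right, J3_grav_right]
    ring
  · rw [J3_add_right, J3_smul_right, J3_smul_right, J3_self]
    ring

/-- The drift, kick, and dissipative maps of the splitting integrator for the damped
elastic pendulum all preserve the azimuthal angular momentum `J₃`; the drift map in fact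
preserves the full cross product `q × p` and is defined for all `q`. Consequently any
composition of these maps exactly conserves `J₃`. -/
theorem elastic_pendulum_splitting_maps_conserve_J3
    (τ m k ℓ g₀ ε : ℝ) (hm : 0 < m) (hk : 0 < k) (hl : 0 < ℓ) (hε : 0 ≤ ε) :
    (∀ q p : EuclideanSpace ℝ (Fin 3), cross3 (q + (τ / m) • p) p = cross3 q p) ∧
    (∀ q p : EuclideanSpace ℝ (Fin 3), J3 (q + (τ / m) • p) p = J3 q p) ∧
    (∀ q p : EuclideanSpace ℝ (Fin 3), q ≠ 0 →
      J3 q (p - (τ * k * (1 - ℓ / ‖q‖)) • q + τ • grav m g₀) = J3 q p) ∧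
    (∀ q p : EuclideanSpace ℝ (Fin 3), q ≠ 0 →
      J3 q (p + (Real.exp (-(τ * ε) / m) - 1) • ((⟪q, p⟫ / ‖q‖ ^ 2) • q)) = J3 q p) :=
  elastic_pendulum_splitting_maps_conserve_J3_general τ m k ℓ g₀ ε
end
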